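/- Let (G,P) be an EDP instance and A ⊆ V(G) such that exactly one edge {ℓ,y} of G, with ℓ ∈ A and y ∉ A, has exactly one endpoint in A. Suppose exactly one terminal pair of P, namely {s,t} with s ∈ A and t ∉ A, has its endpoints on opposite sides of A, and every other pair has both endpoints in A or both in V(G)∖A. Then (G,P) is a YES-instance of EDP if and only if both of the following hold: (1) (G[A], P_A together with one additional pair {s,ℓ}) is a YES-instance of EDP, and (2) (G', P_{V(G)∖A} together with one additional pair {s',t}) is a YES-instance of EDP, where G' is obtained from G[V(G)∖A] by adding one new vertex s' whose only neighbor is y. -/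

import Mathlib

/-- A solution to an instance `(G, P)` of the Edge Disjoint Paths problem:
a family of paths, one per terminal pair, that are pairwise edge-disjoint. -/
def EDPSolution {V ι : Type*} (G : SimpleGraph V) (P : ι → V × V)
    (W : ∀ i : ι, G.Walk (P i).1 (P i).2) : Prop :=
  (∀ i, (W i).IsPath) ∧
    ∀ i j, i ≠ j → ∀ e ∈ (W i).edges, e ∉ (W j).edges

/-- `(G, P)` is a YES-instance of the Edge Disjoint Paths problem. -/
def EDPYes {V ι : Type*} (G : SimpleGraph V) (P : ι → V × V) : Prop :=
  ∃ W : ∀ i : ι, G.Walk (P i).1 (P i).2, EDPSolution G P W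

/-- The graph obtained from `G` by adding one new vertex (`none`) whose only
neighbor is `y`. -/
def addPendant {V : Type*} (G : SimpleGraph V) (y : V) : SimpleGraph (Option V) :=
  (G.map (some : V → Option V)) ⊔
    SimpleGraph.fromRel (fun a b => a = none ∧ b = some y)

/-!
Any walk from `A` to its complement uses the bridge `ℓy`, and a trail uses it at most once.
Hence in a solution every path whose ends lie on one side stays on that side, while the path
of the crossing pair splits into an `s`–`ℓ` path inside `A` and a `y`–`t` path outside `A`,
which the pendant edge `s'y` extends to an `s'`–`t` path. Conversely, mapping `s'` to `ℓ` and
gluing the `s`–`ℓ` and `s'`–`t` paths at `ℓ` yields an `s`–`t` path of `G`.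
Edge-disjointness is preserved in both directions, since the edges of `G[A]`, those of
`G[V ∖ A]` and the bridge are distinct edges of `G`.
-/

open SimpleGraph Function

namespace SimpleGraph.Walk

variable {V : Type*} {G : SimpleGraph V} {u v w : V}

theorem IsPath.induce {S : Set V} {p : G.Walk u v} (hp : p.IsPath)
    (hS : ∀ x ∈ p.support, x ∈ S) : (p.induce S hS).IsPath := by
  rwa [← isPath_map_iff_of_injective (f := (Embedding.induce S).toHom) Subtype.val_injective,
    map_induce]

theorem IsPath.append_of_disjoint {p : G.Walk u v} {q : G.Walk v w} (hp : p.IsPath)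
    (hq : q.IsPath) (hpq : p.support.Disjoint q.support.tail) : (p.append q).IsPath := by
  rw [isPath_def, support_append]
  exact List.nodup_append'.2
    ⟨hp.support_nodup, hq.support_nodup.sublist (List.tail_sublist _), hpq⟩

end SimpleGraph.Walk

section Transfer

variable {V V' ι ι' κ κ' α : Type*} {G : SimpleGraph V} {G' : SimpleGraph V'}

theorem EDPSolution.edpYes_of_map_edges_subset {P : ι → V × V}
    {W : ∀ i, G.Walk (P i).1 (P i).2} (hW : EDPSolution G P W) {P' : ι' → V' × V'}
    (φ : G' →g G) (f : ι' → ι) (hf : Injective f)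
    (h : ∀ k, ∃ w : G'.Walk (P' k).1 (P' k).2,
      w.IsPath ∧ (w.map φ).edges ⊆ (W (f k)).edges) :
    EDPYes G' P' := by
  choose w hpath hsub using h
  refine ⟨w, hpath, fun k k' hkk' e he he' => hW.2 (f k) (f k') (hf.ne hkk') (e.map φ) ?_ ?_⟩
  · exact hsub k (by rw [Walk.edges_map]; exact List.mem_map_of_mem he)
  · exact hsub k' (by rw [Walk.edges_map]; exact List.mem_map_of_mem he')

theorem edpYes_of_edges_covered {P : ι → V × V} {L : κ → List (Sym2 V)}
    (hL : Pairwise (List.Disjoint on L)) (g : κ → ι)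
    (h : ∀ i, ∃ w : G.Walk (P i).1 (P i).2,
      w.IsPath ∧ ∀ e ∈ w.edges, ∃ k, g k = i ∧ e ∈ L k) :
    EDPYes G P := by
  choose w hpath hcover using h
  refine ⟨w, hpath, fun i j hij e hi hj => ?_⟩
  obtain ⟨k, rfl, hk⟩ := hcover _ e hi
  obtain ⟨k', rfl, hk'⟩ := hcover _ e hj
  exact hL (fun h => hij (congrArg g h)) hk hk'

theorem EDPSolution.pairwise_disjoint_map_edges {P' : ι' → V' × V'}
    {W : ∀ k, G'.Walk (P' k).1 (P' k).2} (hW : EDPSolution G' P' W) {φ : G' →g G}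
    (hφ : Injective φ) : Pairwise (List.Disjoint on fun k => ((W k).map φ).edges) := by
  intro k k' hkk'
  simp only [onFun, Walk.edges_map]
  exact List.Disjoint.map (Sym2.map.injective hφ) fun e he he' => hW.2 k k' hkk' e he he'

theorem pairwise_disjoint_sumElim {L₁ : κ → List α} {L₂ : κ' → List α}
    (h₁ : Pairwise (List.Disjoint on L₁)) (h₂ : Pairwise (List.Disjoint on L₂))
    (h₁₂ : ∀ a b, (L₁ a).Disjoint (L₂ b)) :
    Pairwise (List.Disjoint on Sum.elim L₁ L₂) := by
  rintro (a | a) (b | b) hab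
  · exact h₁ fun h => hab (congrArg _ h)
  · exact h₁₂ a b
  · exact (h₁₂ b a).symm
  · exact h₂ fun h => hab (congrArg _ h)

theorem injective_optionElim_val {p : ι → Prop} {i₀ : ι} (h : ¬p i₀) :
    Injective fun k : Option (Subtype p) => k.elim i₀ Subtype.val := by
  rintro (_ | ⟨i, hi⟩) (_ | ⟨j, hj⟩) hij
  · rfl
  · exact absurd ((show i₀ = j from hij) ▸ hj) h
  · exact absurd ((show i = i₀ from hij) ▸ hi) h
  · exact congrArg some (Subtype.ext hij)

end Transfer

section Pendant

variable {V W : Type*} {H : SimpleGraph V} {G : SimpleGraph W} {y : V}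

@[simp] theorem addPendant_adj_some_some {a b : V} :
    (addPendant H y).Adj (some a) (some b) ↔ H.Adj a b := by
  simpa [addPendant, map_adj'] using Adj.ne

@[simp] theorem addPendant_adj_none_left {b : Option V} :
    (addPendant H y).Adj none b ↔ b = some y := by
  simp +contextual [addPendant, map_adj']

theorem exists_some_mem_of_mem_edgeSet_addPendant {e : Sym2 (Option V)}
    (he : e ∈ (addPendant H y).edgeSet) : ∃ a, some a ∈ e := by
  induction e using Sym2.ind with
  | _ u v =>
    cases u with
    | none => exact ⟨y, by simp_all⟩
    | some a => exact ⟨a, Sym2.mem_mk_left _ _⟩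

-- reducible, so that rewriting recognises `addPendantHom H y a` as the vertex `some a`
variable (H y) in
abbrev addPendantHom : H →g addPendant H y :=
  ⟨some, addPendant_adj_some_some.2⟩

def addPendantLift (φ : H →g G) {z : W} (hz : G.Adj z (φ y)) : addPendant H y →g G where
  toFun o := o.elim z φ
  map_rel' := by
    rintro (_ | a) (_ | b) h
    · simp at h
    · obtain rfl : b = y := by simpa using h
      exact hz
    · obtain rfl : a = y := by simpa using h.symm
      exact hz.symm
    · exact φ.map_adj (addPendant_adj_some_some.1 h)

theorem addPendantHom_injective : Injective (addPendantHom H y) :=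
  Option.some_injective _

variable {φ : H →g G} {z : W} (hz : G.Adj z (φ y))

theorem map_addPendantLift_map_addPendantHom {u v : V} (p : H.Walk u v) :
    (p.map (addPendantHom H y)).map (addPendantLift φ hz) = p.map φ := by
  rw [Walk.map_map]
  rfl

theorem addPendantLift_injective (hφ : Injective φ) (hzφ : z ∉ Set.range φ) :
    Injective (addPendantLift φ hz) := by
  rintro (_ | a) (_ | b) h
  · rfl
  · exact absurd ⟨b, h.symm⟩ hzφ
  · exact absurd ⟨a, h⟩ hzφ
  · exact congrArg some (hφ h)

end Pendant

section Cut

variable {V : Type*} {G : SimpleGraph V} {A : Set V} {ℓ y : V}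
  (huniq : ∀ x z, G.Adj x z → x ∈ A → z ∉ A → x = ℓ ∧ z = y)
include huniq

theorem bridge_mem_edges_of_mem_of_notMem {u v : V} (p : G.Walk u v) (hu : u ∈ A)
    (hv : v ∉ A) : s(ℓ, y) ∈ p.edges := by
  obtain ⟨⟨⟨a, b⟩, hab⟩, hd, ha, hb⟩ := p.exists_boundary_dart A hu hv
  obtain ⟨rfl, rfl⟩ := huniq a b hab ha hb
  exact List.mem_map_of_mem hd

theorem bridge_mem_edges_of_mem_iff_notMem {u v : V} (p : G.Walk u v)
    (huv : u ∈ A ↔ v ∉ A) : s(ℓ, y) ∈ p.edges := by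
  by_cases hu : u ∈ A
  · exact bridge_mem_edges_of_mem_of_notMem huniq p hu (huv.1 hu)
  · simpa using bridge_mem_edges_of_mem_of_notMem huniq p.reverse (by tauto) hu

theorem SimpleGraph.Walk.IsTrail.mem_iff_of_mem_support {u v x : V} {p : G.Walk u v}
    (hp : p.IsTrail) (huv : u ∈ A ↔ v ∈ A) (hx : x ∈ p.support) : x ∈ A ↔ u ∈ A := by
  classical
  by_contra hxu
  -- a trail cannot cross the cut there and back: it has only one crossing edge
  have h₁ := bridge_mem_edges_of_mem_iff_notMem huniq (p.takeUntil x hx) (by tauto)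
  have h₂ := bridge_mem_edges_of_mem_iff_notMem huniq (p.dropUntil x hx) (by tauto)
  have hnodup := hp.edges_nodup
  rw [← p.take_spec hx, Walk.edges_append] at hnodup
  exact List.disjoint_of_nodup_append hnodup h₁ h₂

theorem SimpleGraph.Walk.IsTrail.support_subset_of_mem {u v : V} {p : G.Walk u v}
    (hp : p.IsTrail) (hu : u ∈ A) (hv : v ∈ A) : ∀ x ∈ p.support, x ∈ A := fun _ hx =>
  (hp.mem_iff_of_mem_support huniq (iff_of_true hu hv) hx).2 hu

theorem SimpleGraph.Walk.IsTrail.support_subset_of_notMem {u v : V} {p : G.Walk u v}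
    (hp : p.IsTrail) (hu : u ∉ A) (hv : v ∉ A) : ∀ x ∈ p.support, x ∈ Aᶜ :=
  fun _ hx hxA => hu ((hp.mem_iff_of_mem_support huniq (iff_of_false hu hv) hx).1 hxA)

end Cut

section Split

variable {V ι : Type*} {G : SimpleGraph V} {P : ι → V × V} {A : Set V} {ℓ y s t : V}
  {i₀ : ι}

def insidePairs (P : ι → V × V) (A : Set V) (s ℓ : A)
    (k : Option {i // (P i).1 ∈ A ∧ (P i).2 ∈ A}) : A × A :=
  k.elim (s, ℓ) fun i => (⟨(P i.1).1, i.2.1⟩, ⟨(P i.1).2, i.2.2⟩)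

def outsidePairs (P : ι → V × V) (A : Set V) (t : ↥Aᶜ)
    (k : Option {i // (P i).1 ∉ A ∧ (P i).2 ∉ A}) : Option ↥Aᶜ × Option ↥Aᶜ :=
  k.elim (none, some t) fun i => (some ⟨(P i.1).1, i.2.1⟩, some ⟨(P i.1).2, i.2.2⟩)

theorem EDPSolution.exists_isPath_edges_eq {W : ∀ i, G.Walk (P i).1 (P i).2}
    (hW : EDPSolution G P W) (hi₀ : P i₀ = (s, t)) :
    ∃ p : G.Walk s t, p.IsPath ∧ p.edges = (W i₀).edges :=
  ⟨(W i₀).copy (by rw [hi₀]) (by rw [hi₀]), by simpa using hW.1 i₀,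
    Walk.edges_copy _ _ _⟩

theorem EDPSolution.edpYes_insidePairs
    (huniq : ∀ x z, G.Adj x z → x ∈ A → z ∉ A → x = ℓ ∧ z = y)
    {W : ∀ i, G.Walk (P i).1 (P i).2} (hW : EDPSolution G P W) (hi₀ : P i₀ = (s, t))
    (hs : s ∈ A) (ht : t ∉ A) (hℓ : ℓ ∈ A) :
    EDPYes (G.induce A) (insidePairs P A ⟨s, hs⟩ ⟨ℓ, hℓ⟩) := by
  classical
  have hf : Injective fun k : Option {i // (P i).1 ∈ A ∧ (P i).2 ∈ A} =>
      k.elim i₀ Subtype.val :=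
    injective_optionElim_val fun h => ht (by simpa [hi₀] using h.2)
  refine hW.edpYes_of_map_edges_subset (Embedding.induce A).toHom _ hf ?_
  rintro (_ | ⟨i, hi⟩) <;> dsimp only [insidePairs, Option.elim]
  · obtain ⟨p, hp, hpW⟩ := hW.exists_isPath_edges_eq hi₀
    have hℓp : ℓ ∈ p.support :=
      p.fst_mem_support_of_mem_edges (bridge_mem_edges_of_mem_of_notMem huniq p hs ht)
    have hq := hp.takeUntil hℓp
    have hqA := hq.isTrail.support_subset_of_mem huniq hs hℓ
    refine ⟨(p.takeUntil ℓ hℓp).induce A hqA, hq.induce hqA, ?_⟩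
    rw [Walk.map_induce, ← hpW]
    exact p.edges_takeUntil_subset_edges hℓp
  · have hA := (hW.1 i).isTrail.support_subset_of_mem huniq hi.1 hi.2
    refine ⟨(W i).induce A hA, (hW.1 i).induce hA, ?_⟩
    rw [Walk.map_induce]
    exact List.Subset.refl _

theorem EDPSolution.edpYes_outsidePairs
    (huniq : ∀ x z, G.Adj x z → x ∈ A → z ∉ A → x = ℓ ∧ z = y)
    {W : ∀ i, G.Walk (P i).1 (P i).2} (hW : EDPSolution G P W) (hi₀ : P i₀ = (s, t))
    (hs : s ∈ A) (ht : t ∉ A) (hy : y ∉ A) (hadj : G.Adj ℓ y) :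
    EDPYes (addPendant (G.induce Aᶜ) ⟨y, hy⟩) (outsidePairs P A ⟨t, ht⟩) := by
  classical
  have hf : Injective fun k : Option {i // (P i).1 ∉ A ∧ (P i).2 ∉ A} =>
      k.elim i₀ Subtype.val :=
    injective_optionElim_val fun h => h.1 (by simpa [hi₀] using hs)
  refine hW.edpYes_of_map_edges_subset
    (addPendantLift (Embedding.induce Aᶜ).toHom (y := ⟨y, hy⟩) hadj) _ hf ?_
  rintro (_ | ⟨i, hi⟩) <;> dsimp only [outsidePairs, Option.elim]
  · obtain ⟨p, hp, hpW⟩ := hW.exists_isPath_edges_eq hi₀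
    have hbridge := bridge_mem_edges_of_mem_of_notMem huniq p hs ht
    have hyp : y ∈ p.support := p.snd_mem_support_of_mem_edges hbridge
    have hq := hp.dropUntil hyp
    have hqA := hq.isTrail.support_subset_of_notMem huniq hy ht
    refine ⟨.cons (addPendant_adj_none_left.2 rfl) (((p.dropUntil y hyp).induce Aᶜ hqA).map
      (addPendantHom _ _)), ?_, ?_⟩
    · exact (hq.induce hqA).map addPendantHom_injective |>.cons (by simp [Walk.support_map])
    · rw [Walk.map_cons, Walk.edges_cons, map_addPendantLift_map_addPendantHom hadj,
        Walk.map_induce, ← hpW]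
      exact List.cons_subset.2 ⟨hbridge, p.edges_dropUntil_subset_edges hyp⟩
  · have hA := (hW.1 i).isTrail.support_subset_of_notMem huniq hi.1 hi.2
    refine ⟨((W i).induce Aᶜ hA).map (addPendantHom _ _),
      ((hW.1 i).induce hA).map addPendantHom_injective, ?_⟩
    rw [map_addPendantLift_map_addPendantHom hadj ((W i).induce Aᶜ hA), Walk.map_induce]
    exact List.Subset.refl _

theorem disjoint_edges_map_induce_edges_map_addPendantLift {a b : A} {c d : Option ↥Aᶜ}
    {y' : ↥Aᶜ} (hadj : G.Adj ℓ y') (p : (G.induce A).Walk a b)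
    (q : (addPendant (G.induce Aᶜ) y').Walk c d) :
    (p.map (Embedding.induce A).toHom).edges.Disjoint
      (q.map (addPendantLift (Embedding.induce Aᶜ).toHom hadj)).edges := by
  intro e hp hq
  rw [Walk.edges_map] at hp hq
  obtain ⟨e₁, -, rfl⟩ := List.mem_map.1 hp
  obtain ⟨e₂, he₂, heq⟩ := List.mem_map.1 hq
  obtain ⟨c, hc⟩ := exists_some_mem_of_mem_edgeSet_addPendant (q.edges_subset_edgeSet he₂)
  have hce : c.val ∈ e₁.map Subtype.val := heq ▸ Sym2.mem_map.2 ⟨some c, hc, rfl⟩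
  obtain ⟨a, -, ha⟩ := Sym2.mem_map.1 hce
  exact c.2 (ha ▸ a.2)

theorem disjoint_support_map_induce_tail_support_map_addPendantLift {a b : A}
    {d : Option ↥Aᶜ} {y' : ↥Aᶜ} (hadj : G.Adj ℓ y') (p : (G.induce A).Walk a b)
    {q : (addPendant (G.induce Aᶜ) y').Walk none d} (hq : q.IsPath) :
    (p.map (Embedding.induce A).toHom).support.Disjoint
      (q.map (addPendantLift (Embedding.induce Aᶜ).toHom hadj)).support.tail := by
  intro x hp hq'
  rw [Walk.support_map] at hp hq'
  rw [← List.map_tail] at hq'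
  obtain ⟨a, -, rfl⟩ := List.mem_map.1 hp
  obtain ⟨_ | c, hc, hca⟩ := List.mem_map.1 hq'
  · have hnodup := hq.support_nodup
    rw [← q.cons_tail_support] at hnodup
    exact (List.nodup_cons.1 hnodup).1 hc
  · exact c.2 ((show (c : V) = a from hca) ▸ a.2)

theorem edpYes_of_edpYes_insidePairs_of_edpYes_outsidePairs (hi₀ : P i₀ = (s, t))
    (hs : s ∈ A) (ht : t ∉ A) (hℓ : ℓ ∈ A) (hy : y ∉ A) (hadj : G.Adj ℓ y)
    (hP : ∀ i, i ≠ i₀ →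
      ((P i).1 ∈ A ∧ (P i).2 ∈ A) ∨ ((P i).1 ∉ A ∧ (P i).2 ∉ A))
    (hin : EDPYes (G.induce A) (insidePairs P A ⟨s, hs⟩ ⟨ℓ, hℓ⟩))
    (hout : EDPYes (addPendant (G.induce Aᶜ) ⟨y, hy⟩) (outsidePairs P A ⟨t, ht⟩)) :
    EDPYes G P := by
  obtain ⟨U, hU⟩ := hin
  obtain ⟨X, hX⟩ := hout
  let φ := addPendantLift (Embedding.induce Aᶜ).toHom (y := ⟨y, hy⟩) hadj
  have hφ : Injective φ := addPendantLift_injective _ Subtype.val_injective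
    fun ⟨a, ha⟩ => a.2 ((show (a : V) = ℓ from ha) ▸ hℓ)
  refine edpYes_of_edges_covered
    (L := Sum.elim (fun k => ((U k).map (Embedding.induce A).toHom).edges)
      fun k => ((X k).map φ).edges)
    (pairwise_disjoint_sumElim (hU.pairwise_disjoint_map_edges Subtype.val_injective)
      (hX.pairwise_disjoint_map_edges hφ)
      fun a b => disjoint_edges_map_induce_edges_map_addPendantLift hadj (U a) (X b))
    (Sum.elim (·.elim i₀ Subtype.val) (·.elim i₀ Subtype.val)) fun i => ?_
  by_cases hi : i = i₀
  · subst hi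
    rw [hi₀]
    refine ⟨((U none).map (Embedding.induce A).toHom).append ((X none).map φ),
      ((hU.1 none).map Subtype.val_injective).append_of_disjoint ((hX.1 none).map hφ)
        (disjoint_support_map_induce_tail_support_map_addPendantLift hadj _ (hX.1 none)),
      fun e he => ?_⟩
    rcases List.mem_append.1 (Walk.edges_append _ _ ▸ he) with he | he
    · exact ⟨.inl none, rfl, he⟩
    · exact ⟨.inr none, rfl, he⟩
  · by_cases hA : (P i).1 ∈ A ∧ (P i).2 ∈ A
    · exact ⟨(U (some ⟨i, hA⟩)).map (Embedding.induce A).toHom,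
        (hU.1 _).map Subtype.val_injective, fun e he => ⟨.inl (some ⟨i, hA⟩), rfl, he⟩⟩
    · have hO := (hP i hi).resolve_left hA
      exact ⟨(X (some ⟨i, hO⟩)).map φ, (hX.1 _).map hφ,
        fun e he => ⟨.inr (some ⟨i, hO⟩), rfl, he⟩⟩

theorem edpYes_iff_insidePairs_outsidePairs (hℓ : ℓ ∈ A) (hy : y ∉ A) (hadj : G.Adj ℓ y)
    (huniq : ∀ x z, G.Adj x z → x ∈ A → z ∉ A → x = ℓ ∧ z = y)
    (hi₀ : P i₀ = (s, t)) (hs : s ∈ A) (ht : t ∉ A)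
    (hP : ∀ i, i ≠ i₀ →
      ((P i).1 ∈ A ∧ (P i).2 ∈ A) ∨ ((P i).1 ∉ A ∧ (P i).2 ∉ A)) :
    EDPYes G P ↔ EDPYes (G.induce A) (insidePairs P A ⟨s, hs⟩ ⟨ℓ, hℓ⟩) ∧
      EDPYes (addPendant (G.induce Aᶜ) ⟨y, hy⟩) (outsidePairs P A ⟨t, ht⟩) := by
  refine ⟨fun ⟨W, hW⟩ => ⟨?_, ?_⟩, fun ⟨hin, hout⟩ => ?_⟩
  · exact hW.edpYes_insidePairs huniq hi₀ hs ht hℓ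
  · exact hW.edpYes_outsidePairs huniq hi₀ hs ht hy hadj
  · exact edpYes_of_edpYes_insidePairs_of_edpYes_outsidePairs hi₀ hs ht hℓ hy hadj hP hin hout

end Split

theorem bridge_split_one_unmatched {V : Type*}
    (G : SimpleGraph V) {m : ℕ} (P : Fin m → V × V) (A : Set V) (ℓ y : V)
    (hℓ : ℓ ∈ A) (hy : y ∉ A) (hadj : G.Adj ℓ y)
    (huniq : ∀ x z, G.Adj x z → x ∈ A → z ∉ A → x = ℓ ∧ z = y)
    (i₀ : Fin m) (s t : V) (hi₀ : P i₀ = (s, t)) (hs : s ∈ A) (ht : t ∉ A)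
    (hP : ∀ i, i ≠ i₀ →
      ((P i).1 ∈ A ∧ (P i).2 ∈ A) ∨ ((P i).1 ∉ A ∧ (P i).2 ∉ A)) :
    EDPYes G P ↔
      (EDPYes (G.induce A)
          (fun i : Option {i : Fin m // (P i).1 ∈ A ∧ (P i).2 ∈ A} =>
            match i with
            | none => (⟨s, hs⟩, ⟨ℓ, hℓ⟩)
            | some i => (⟨(P i.1).1, i.2.1⟩, ⟨(P i.1).2, i.2.2⟩)) ∧
        EDPYes (addPendant (G.induce Aᶜ) ⟨y, hy⟩)
          (fun i : Option {i : Fin m // (P i).1 ∉ A ∧ (P i).2 ∉ A} =>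
            match i with
            | none => (none, some ⟨t, ht⟩)
            | some i =>
              (some ⟨(P i.1).1, i.2.1⟩, some ⟨(P i.1).2, i.2.2⟩))) := by
  convert edpYes_iff_insidePairs_outsidePairs hℓ hy hadj huniq hi₀ hs ht hP using 3 <;>
    funext k <;> cases k <;> rfl
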